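/- Let M₁ = (S, A, μ, p₁, r) and M₂ = (S, A, μ, p₂, r) be two finite MDPs differing only in dynamics, with policies π₁, π₂ respectively. If E_{(s,a)∼d₁^{π₁}}[D_TV(p₁(·|s,a), p₂(·|s,a))] ≤ ε_m and E_{s∼d₁^{π₁}}[D_TV(π₁(·|s), π₂(·|s))] ≤ ε_π, then the total variation between discounted state-action distributions satisfies ∑_{s,a} |d₁^{π₁}(s,a) − d₂^{π₂}(s,a)| ≤ (1/(1−γ))(2γ ε_m + 2 ε_π). -/

import Mathlib

open scoped BigOperators

/-- Probability of being in each state at time `t` under initial distribution `μ`,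
dynamics `p`, and policy `π`. -/
noncomputable def stateProb {S A : Type*} [Fintype S] [Fintype A]
    (μ : S → ℝ) (p : S → A → S → ℝ) (π : S → A → ℝ) : ℕ → S → ℝ
  | 0 => μ
  | t + 1 => fun s => ∑ s₀ : S, ∑ a₀ : A, stateProb μ p π t s₀ * π s₀ a₀ * p s₀ a₀ s

/-- Discounted state distribution `d^π(s) = (1-γ) ∑_{t≥0} γ^t P(s_t = s)`. -/
noncomputable def dState {S A : Type*} [Fintype S] [Fintype A]
    (γ : ℝ) (μ : S → ℝ) (p : S → A → S → ℝ) (π : S → A → ℝ) (s : S) : ℝ :=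
  (1 - γ) * ∑' t : ℕ, γ ^ t * stateProb μ p π t s

/-- Discounted state-action distribution `d^π(s,a) = π(a|s) d^π(s)`. -/
noncomputable def dSA {S A : Type*} [Fintype S] [Fintype A]
    (γ : ℝ) (μ : S → ℝ) (p : S → A → S → ℝ) (π : S → A → ℝ) (s : S) (a : A) : ℝ :=
  π s a * dState γ μ p π s

/-- Total variation distance between distributions on a finite set. -/
noncomputable def DTV {X : Type*} [Fintype X] (p q : X → ℝ) : ℝ :=
  (1 / 2) * ∑ x, |p x - q x|

/-- Expected discounted return `J_M(π) = (1/(1-γ)) E_{(s,a)∼d^π}[r(s,a)]`. -/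
noncomputable def J {S A : Type*} [Fintype S] [Fintype A]
    (γ : ℝ) (μ : S → ℝ) (p : S → A → S → ℝ) (π : S → A → ℝ) (r : S → A → ℝ) : ℝ :=
  (1 / (1 - γ)) * ∑ s, ∑ a, dSA γ μ p π s a * r s a

/-- A probability distribution on a finite set. -/
def IsProb {X : Type*} [Fintype X] (p : X → ℝ) : Prop :=
  (∀ x, 0 ≤ p x) ∧ ∑ x, p x = 1

lemma DTV_nonneg {X : Type*} [Fintype X] (p q : X → ℝ) : 0 ≤ DTV p q := by
  unfold DTV
  positivity

lemma sum_abs_eq_two_DTV {X : Type*} [Fintype X] (p q : X → ℝ) :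
    ∑ x, |p x - q x| = 2 * DTV p q := by
  unfold DTV; ring

lemma sum_abs_sub_le {X : Type*} [Fintype X] {p q : X → ℝ} (hp : IsProb p) (hq : IsProb q) :
    ∑ x, |p x - q x| ≤ 2 := by
  calc ∑ x, |p x - q x| ≤ ∑ x, (p x + q x) := by
        apply Finset.sum_le_sum
        intro x _
        calc |p x - q x| ≤ |p x| + |q x| := abs_sub _ _
          _ = p x + q x := by rw [abs_of_nonneg (hp.1 x), abs_of_nonneg (hq.1 x)]
    _ = 2 := by rw [Finset.sum_add_distrib, hp.2, hq.2]; norm_num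

lemma DTV_le_one {X : Type*} [Fintype X] {p q : X → ℝ} (hp : IsProb p) (hq : IsProb q) :
    DTV p q ≤ 1 := by
  unfold DTV
  nlinarith [sum_abs_sub_le hp hq]

lemma stateProb_isProb {S A : Type*} [Fintype S] [Fintype A]
    {μ : S → ℝ} {p : S → A → S → ℝ} {π : S → A → ℝ}
    (hμ : IsProb μ) (hp : ∀ s a, IsProb (p s a)) (hπ : ∀ s, IsProb (π s)) (t : ℕ) :
    IsProb (stateProb μ p π t) := by
  induction t with
  | zero => exact hμ
  | succ t ih =>
    constructor
    · intro s
      apply Finset.sum_nonneg; intro s₀ _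
      apply Finset.sum_nonneg; intro a₀ _
      have := ih.1 s₀
      have := (hπ s₀).1 a₀
      have := (hp s₀ a₀).1 s
      positivity
    · show ∑ s : S, ∑ s₀ : S, ∑ a₀ : A, stateProb μ p π t s₀ * π s₀ a₀ * p s₀ a₀ s = 1
      rw [Finset.sum_comm]
      calc ∑ s₀ : S, ∑ s : S, ∑ a₀ : A, stateProb μ p π t s₀ * π s₀ a₀ * p s₀ a₀ s
          = ∑ s₀ : S, ∑ a₀ : A, ∑ s : S, stateProb μ p π t s₀ * π s₀ a₀ * p s₀ a₀ s := by
            congr 1; ext s₀; rw [Finset.sum_comm]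
        _ = ∑ s₀ : S, ∑ a₀ : A, stateProb μ p π t s₀ * π s₀ a₀ := by
            congr 1; ext s₀; congr 1; ext a₀
            rw [← Finset.mul_sum, (hp s₀ a₀).2, mul_one]
        _ = ∑ s₀ : S, stateProb μ p π t s₀ := by
            congr 1; ext s₀
            rw [← Finset.mul_sum, (hπ s₀).2, mul_one]
        _ = 1 := ih.2

lemma summable_geom_bound {γ : ℝ} (hγ0 : 0 ≤ γ) (hγ1 : γ < 1) {f : ℕ → ℝ} {C : ℝ}
    (hf : ∀ t, |f t| ≤ C) : Summable (fun t => γ ^ t * f t) := by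
  apply Summable.of_norm_bounded (g := fun t => C * γ ^ t)
    ((summable_geometric_of_lt_one hγ0 hγ1).mul_left C)
  intro t
  rw [Real.norm_eq_abs, abs_mul, abs_pow, abs_of_nonneg hγ0, mul_comm C]
  exact mul_le_mul_of_nonneg_left (hf t) (by positivity)

section Main

variable {S A : Type*} [Fintype S] [Fintype A]
    (γ : ℝ) (hγ0 : 0 ≤ γ) (hγ1 : γ < 1)
    (μ : S → ℝ) (hμ : IsProb μ)
    (p₁ p₂ : S → A → S → ℝ) (hp₁ : ∀ s a, IsProb (p₁ s a)) (hp₂ : ∀ s a, IsProb (p₂ s a))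
    (π₁ π₂ : S → A → ℝ) (hπ₁ : ∀ s, IsProb (π₁ s)) (hπ₂ : ∀ s, IsProb (π₂ s))

include hμ hp₁ hp₂ hπ₁ hπ₂

/-- The one-step recursion bound for the state distribution difference. -/
lemma delta_step (t : ℕ) :
    ∑ s : S, |stateProb μ p₁ π₁ (t+1) s - stateProb μ p₂ π₂ (t+1) s| ≤
      (∑ s : S, |stateProb μ p₁ π₁ t s - stateProb μ p₂ π₂ t s|)
      + 2 * (∑ s : S, stateProb μ p₁ π₁ t s * DTV (π₁ s) (π₂ s))
      + 2 * (∑ s : S, ∑ a : A, stateProb μ p₁ π₁ t s * π₁ s a * DTV (p₁ s a) (p₂ s a)) := by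
  set P1 := stateProb μ p₁ π₁ with hP1
  set P2 := stateProb μ p₂ π₂ with hP2
  have hP1p : ∀ t, IsProb (P1 t) := stateProb_isProb hμ hp₁ hπ₁
  have key : ∀ s, |P1 (t+1) s - P2 (t+1) s| ≤
      ∑ s₀ : S, ∑ a₀ : A, (|P1 t s₀ - P2 t s₀| * π₂ s₀ a₀ * p₂ s₀ a₀ s
        + P1 t s₀ * |π₁ s₀ a₀ - π₂ s₀ a₀| * p₂ s₀ a₀ s
        + P1 t s₀ * π₁ s₀ a₀ * |p₁ s₀ a₀ s - p₂ s₀ a₀ s|) := by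
    intro s
    have hdiff : P1 (t+1) s - P2 (t+1) s =
        ∑ s₀ : S, ∑ a₀ : A, ((P1 t s₀ - P2 t s₀) * π₂ s₀ a₀ * p₂ s₀ a₀ s
          + P1 t s₀ * (π₁ s₀ a₀ - π₂ s₀ a₀) * p₂ s₀ a₀ s
          + P1 t s₀ * π₁ s₀ a₀ * (p₁ s₀ a₀ s - p₂ s₀ a₀ s)) := by
      show (∑ s₀ : S, ∑ a₀ : A, P1 t s₀ * π₁ s₀ a₀ * p₁ s₀ a₀ s)
          - (∑ s₀ : S, ∑ a₀ : A, P2 t s₀ * π₂ s₀ a₀ * p₂ s₀ a₀ s) = _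
      rw [← Finset.sum_sub_distrib]
      refine Finset.sum_congr rfl fun s₀ _ => ?_
      rw [← Finset.sum_sub_distrib]
      refine Finset.sum_congr rfl fun a₀ _ => ?_
      ring
    rw [hdiff]
    refine (Finset.abs_sum_le_sum_abs _ _).trans ?_
    apply Finset.sum_le_sum; intro s₀ _
    refine (Finset.abs_sum_le_sum_abs _ _).trans ?_
    apply Finset.sum_le_sum; intro a₀ _
    have h2 := (hπ₂ s₀).1 a₀
    have h3 := (hp₂ s₀ a₀).1 s
    have h4 := (hP1p t).1 s₀
    have h5 := (hπ₁ s₀).1 a₀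
    have e1 : |(P1 t s₀ - P2 t s₀) * π₂ s₀ a₀ * p₂ s₀ a₀ s|
        = |P1 t s₀ - P2 t s₀| * π₂ s₀ a₀ * p₂ s₀ a₀ s := by
      rw [abs_mul, abs_mul, abs_of_nonneg h2, abs_of_nonneg h3]
    have e2 : |P1 t s₀ * (π₁ s₀ a₀ - π₂ s₀ a₀) * p₂ s₀ a₀ s|
        = P1 t s₀ * |π₁ s₀ a₀ - π₂ s₀ a₀| * p₂ s₀ a₀ s := by
      rw [abs_mul, abs_mul, abs_of_nonneg h4, abs_of_nonneg h3]
    have e3 : |P1 t s₀ * π₁ s₀ a₀ * (p₁ s₀ a₀ s - p₂ s₀ a₀ s)|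
        = P1 t s₀ * π₁ s₀ a₀ * |p₁ s₀ a₀ s - p₂ s₀ a₀ s| := by
      rw [abs_mul, abs_mul, abs_of_nonneg h4, abs_of_nonneg h5]
    calc |(P1 t s₀ - P2 t s₀) * π₂ s₀ a₀ * p₂ s₀ a₀ s
          + P1 t s₀ * (π₁ s₀ a₀ - π₂ s₀ a₀) * p₂ s₀ a₀ s
          + P1 t s₀ * π₁ s₀ a₀ * (p₁ s₀ a₀ s - p₂ s₀ a₀ s)|
        ≤ |(P1 t s₀ - P2 t s₀) * π₂ s₀ a₀ * p₂ s₀ a₀ s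
          + P1 t s₀ * (π₁ s₀ a₀ - π₂ s₀ a₀) * p₂ s₀ a₀ s|
          + |P1 t s₀ * π₁ s₀ a₀ * (p₁ s₀ a₀ s - p₂ s₀ a₀ s)| := abs_add_le _ _
      _ ≤ |(P1 t s₀ - P2 t s₀) * π₂ s₀ a₀ * p₂ s₀ a₀ s|
          + |P1 t s₀ * (π₁ s₀ a₀ - π₂ s₀ a₀) * p₂ s₀ a₀ s|
          + |P1 t s₀ * π₁ s₀ a₀ * (p₁ s₀ a₀ s - p₂ s₀ a₀ s)| := by
            have := abs_add_le ((P1 t s₀ - P2 t s₀) * π₂ s₀ a₀ * p₂ s₀ a₀ s)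
              (P1 t s₀ * (π₁ s₀ a₀ - π₂ s₀ a₀) * p₂ s₀ a₀ s)
            linarith
      _ = _ := by rw [e1, e2, e3]
  calc ∑ s : S, |P1 (t+1) s - P2 (t+1) s|
      ≤ ∑ s : S, ∑ s₀ : S, ∑ a₀ : A, (|P1 t s₀ - P2 t s₀| * π₂ s₀ a₀ * p₂ s₀ a₀ s
        + P1 t s₀ * |π₁ s₀ a₀ - π₂ s₀ a₀| * p₂ s₀ a₀ s
        + P1 t s₀ * π₁ s₀ a₀ * |p₁ s₀ a₀ s - p₂ s₀ a₀ s|) :=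
        Finset.sum_le_sum fun s _ => key s
    _ = ∑ s₀ : S, ∑ a₀ : A, ∑ s : S, (|P1 t s₀ - P2 t s₀| * π₂ s₀ a₀ * p₂ s₀ a₀ s
        + P1 t s₀ * |π₁ s₀ a₀ - π₂ s₀ a₀| * p₂ s₀ a₀ s
        + P1 t s₀ * π₁ s₀ a₀ * |p₁ s₀ a₀ s - p₂ s₀ a₀ s|) := by
        rw [Finset.sum_comm]
        refine Finset.sum_congr rfl fun s₀ _ => ?_
        rw [Finset.sum_comm]
    _ = ∑ s₀ : S, ∑ a₀ : A, (|P1 t s₀ - P2 t s₀| * π₂ s₀ a₀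
        + P1 t s₀ * |π₁ s₀ a₀ - π₂ s₀ a₀|
        + P1 t s₀ * π₁ s₀ a₀ * (2 * DTV (p₁ s₀ a₀) (p₂ s₀ a₀))) := by
        refine Finset.sum_congr rfl fun s₀ _ => Finset.sum_congr rfl fun a₀ _ => ?_
        rw [Finset.sum_add_distrib, Finset.sum_add_distrib,
          ← Finset.mul_sum, ← Finset.mul_sum, ← Finset.mul_sum,
          (hp₂ s₀ a₀).2, mul_one, mul_one, sum_abs_eq_two_DTV]
    _ = _ := by
        have inner : ∀ s₀ : S, ∑ a₀ : A, (|P1 t s₀ - P2 t s₀| * π₂ s₀ a₀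
            + P1 t s₀ * |π₁ s₀ a₀ - π₂ s₀ a₀|
            + P1 t s₀ * π₁ s₀ a₀ * (2 * DTV (p₁ s₀ a₀) (p₂ s₀ a₀)))
            = |P1 t s₀ - P2 t s₀| + 2 * (P1 t s₀ * DTV (π₁ s₀) (π₂ s₀))
              + 2 * ∑ a₀ : A, P1 t s₀ * π₁ s₀ a₀ * DTV (p₁ s₀ a₀) (p₂ s₀ a₀) := by
          intro s₀
          rw [Finset.sum_add_distrib, Finset.sum_add_distrib]
          have A1 : ∑ a₀ : A, |P1 t s₀ - P2 t s₀| * π₂ s₀ a₀ = |P1 t s₀ - P2 t s₀| := by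
            rw [← Finset.mul_sum, (hπ₂ s₀).2, mul_one]
          have A2 : ∑ a₀ : A, P1 t s₀ * |π₁ s₀ a₀ - π₂ s₀ a₀|
              = 2 * (P1 t s₀ * DTV (π₁ s₀) (π₂ s₀)) := by
            rw [← Finset.mul_sum, sum_abs_eq_two_DTV]; ring
          have A3 : ∑ a₀ : A, P1 t s₀ * π₁ s₀ a₀ * (2 * DTV (p₁ s₀ a₀) (p₂ s₀ a₀))
              = 2 * ∑ a₀ : A, P1 t s₀ * π₁ s₀ a₀ * DTV (p₁ s₀ a₀) (p₂ s₀ a₀) := by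
            rw [Finset.mul_sum]
            exact Finset.sum_congr rfl fun a₀ _ => by ring
          rw [A1, A2, A3]
        rw [Finset.sum_congr rfl fun s₀ _ => inner s₀]
        rw [Finset.sum_add_distrib, Finset.sum_add_distrib,
          ← Finset.mul_sum, ← Finset.mul_sum]

end Main

/-- Bound on the difference of discounted state-action distributions of two MDPs
sharing `S`, `A`, `μ` but with dynamics `p₁`, `p₂` and policies `π₁`, `π₂`. -/
theorem discounted_distribution_difference_bound {S A : Type*} [Fintype S] [Fintype A]
    (γ : ℝ) (hγ0 : 0 ≤ γ) (hγ1 : γ < 1)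
    (μ : S → ℝ) (hμ : IsProb μ)
    (p₁ p₂ : S → A → S → ℝ) (hp₁ : ∀ s a, IsProb (p₁ s a)) (hp₂ : ∀ s a, IsProb (p₂ s a))
    (π₁ π₂ : S → A → ℝ) (hπ₁ : ∀ s, IsProb (π₁ s)) (hπ₂ : ∀ s, IsProb (π₂ s))
    (εm επ : ℝ)
    (hm : ∑ s : S, ∑ a : A, dSA γ μ p₁ π₁ s a * DTV (p₁ s a) (p₂ s a) ≤ εm)
    (hπ : ∑ s : S, dState γ μ p₁ π₁ s * DTV (π₁ s) (π₂ s) ≤ επ) :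
    ∑ s : S, ∑ a : A, |dSA γ μ p₁ π₁ s a - dSA γ μ p₂ π₂ s a| ≤
      (1 / (1 - γ)) * (2 * γ * εm + 2 * επ) := by
  have h1γ : (0:ℝ) < 1 - γ := by linarith
  set P1 := stateProb μ p₁ π₁ with hP1d
  set P2 := stateProb μ p₂ π₂ with hP2d
  have hP1p : ∀ t, IsProb (P1 t) := stateProb_isProb hμ hp₁ hπ₁
  have hP2p : ∀ t, IsProb (P2 t) := stateProb_isProb hμ hp₂ hπ₂
  have hP1le : ∀ t s, P1 t s ≤ 1 := fun t s => by
    have h := Finset.single_le_sum (fun i _ => (hP1p t).1 i) (Finset.mem_univ s)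
    rw [(hP1p t).2] at h; exact h
  have hπ₁le : ∀ s a, π₁ s a ≤ 1 := fun s a => by
    have h := Finset.single_le_sum (fun i _ => (hπ₁ s).1 i) (Finset.mem_univ a)
    rw [(hπ₁ s).2] at h; exact h
  set δ : ℕ → ℝ := fun t => ∑ s : S, |P1 t s - P2 t s| with hδd
  set e : ℕ → ℝ := fun t => ∑ s : S, P1 t s * DTV (π₁ s) (π₂ s) with hed
  set fq : ℕ → ℝ := fun t => ∑ s : S, ∑ a : A, P1 t s * π₁ s a * DTV (p₁ s a) (p₂ s a) with hfd
  have hδabs : ∀ t, |δ t| ≤ 2 := by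
    intro t
    have h0 : 0 ≤ δ t := Finset.sum_nonneg fun s _ => abs_nonneg _
    rw [abs_of_nonneg h0]
    exact sum_abs_sub_le (hP1p t) (hP2p t)
  have heabs : ∀ t, |e t| ≤ 1 := by
    intro t
    have h0 : 0 ≤ e t := Finset.sum_nonneg fun s _ =>
      mul_nonneg ((hP1p t).1 s) (DTV_nonneg _ _)
    rw [abs_of_nonneg h0]
    calc e t ≤ ∑ s : S, P1 t s :=
        Finset.sum_le_sum fun s _ =>
          mul_le_of_le_one_right ((hP1p t).1 s) (DTV_le_one (hπ₁ s) (hπ₂ s))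
      _ = 1 := (hP1p t).2
  have hfabs : ∀ t, |fq t| ≤ 1 := by
    intro t
    have h0 : 0 ≤ fq t := Finset.sum_nonneg fun s _ => Finset.sum_nonneg fun a _ =>
      mul_nonneg (mul_nonneg ((hP1p t).1 s) ((hπ₁ s).1 a)) (DTV_nonneg _ _)
    rw [abs_of_nonneg h0]
    calc fq t ≤ ∑ s : S, ∑ a : A, P1 t s * π₁ s a :=
        Finset.sum_le_sum fun s _ => Finset.sum_le_sum fun a _ =>
          mul_le_of_le_one_right (mul_nonneg ((hP1p t).1 s) ((hπ₁ s).1 a))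
            (DTV_le_one (hp₁ s a) (hp₂ s a))
      _ = ∑ s : S, P1 t s := Finset.sum_congr rfl fun s _ => by
          rw [← Finset.mul_sum, (hπ₁ s).2, mul_one]
      _ = 1 := (hP1p t).2
  have hSδ : Summable (fun t => γ ^ t * δ t) := summable_geom_bound hγ0 hγ1 hδabs
  have hSe : Summable (fun t => γ ^ t * e t) := summable_geom_bound hγ0 hγ1 heabs
  have hSf : Summable (fun t => γ ^ t * fq t) := summable_geom_bound hγ0 hγ1 hfabs
  set D : ℝ := ∑' t, γ ^ t * δ t with hDd
  set E : ℝ := ∑' t, γ ^ t * e t with hEd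
  set F : ℝ := ∑' t, γ ^ t * fq t with hFd
  have hδ0 : δ 0 = 0 := by
    have h : ∀ s : S, P1 0 s = P2 0 s := fun s => rfl
    simp [hδd, h]
  have hrec : ∀ t, δ (t + 1) ≤ δ t + 2 * e t + 2 * fq t := fun t =>
    delta_step μ hμ p₁ p₂ hp₁ hp₂ π₁ π₂ hπ₁ hπ₂ t
  have hSδ' : Summable (fun t => γ ^ (t + 1) * δ (t + 1)) := by
    have h := (summable_nat_add_iff (f := fun t => γ ^ t * δ t) 1).2 hSδ
    simpa using h
  have hSrhs : Summable (fun t => γ * (γ ^ t * δ t) + (2 * γ) * (γ ^ t * e t)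
      + (2 * γ) * (γ ^ t * fq t)) :=
    ((hSδ.mul_left γ).add (hSe.mul_left (2 * γ))).add (hSf.mul_left (2 * γ))
  have hDrec : D ≤ γ * D + (2 * γ) * E + (2 * γ) * F := by
    have step1 : D = ∑' t, γ ^ (t + 1) * δ (t + 1) := by
      rw [hDd, Summable.tsum_eq_zero_add hSδ, hδ0]; simp
    have step2 : ∑' t, γ ^ (t + 1) * δ (t + 1) ≤
        ∑' t, (γ * (γ ^ t * δ t) + (2 * γ) * (γ ^ t * e t) + (2 * γ) * (γ ^ t * fq t)) := by
      refine Summable.tsum_le_tsum (fun t => ?_) hSδ' hSrhs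
      calc γ ^ (t + 1) * δ (t + 1) ≤ γ ^ (t + 1) * (δ t + 2 * e t + 2 * fq t) :=
          mul_le_mul_of_nonneg_left (hrec t) (pow_nonneg hγ0 (t + 1))
        _ = γ * (γ ^ t * δ t) + (2 * γ) * (γ ^ t * e t) + (2 * γ) * (γ ^ t * fq t) := by ring
    have step3 : ∑' t, (γ * (γ ^ t * δ t) + (2 * γ) * (γ ^ t * e t)
        + (2 * γ) * (γ ^ t * fq t)) = γ * D + (2 * γ) * E + (2 * γ) * F := by
      rw [Summable.tsum_add ((hSδ.mul_left γ).add (hSe.mul_left (2 * γ))) (hSf.mul_left (2 * γ)),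
        Summable.tsum_add (hSδ.mul_left γ) (hSe.mul_left (2 * γ)), tsum_mul_left, tsum_mul_left,
        tsum_mul_left]
    calc D = ∑' t, γ ^ (t + 1) * δ (t + 1) := step1
      _ ≤ _ := step2
      _ = _ := step3
  have hSPe : ∀ s : S, Summable (fun t => γ ^ t * (P1 t s * DTV (π₁ s) (π₂ s))) := by
    intro s
    apply summable_geom_bound hγ0 hγ1 (C := DTV (π₁ s) (π₂ s))
    intro t
    rw [abs_of_nonneg (mul_nonneg ((hP1p t).1 s) (DTV_nonneg _ _))]
    exact mul_le_of_le_one_left (DTV_nonneg _ _) (hP1le t s)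
  have hEeq : ∑ s : S, dState γ μ p₁ π₁ s * DTV (π₁ s) (π₂ s) = (1 - γ) * E := by
    have hterm : ∀ s : S, dState γ μ p₁ π₁ s * DTV (π₁ s) (π₂ s)
        = (1 - γ) * ∑' t, γ ^ t * (P1 t s * DTV (π₁ s) (π₂ s)) := by
      intro s
      show ((1 - γ) * ∑' t, γ ^ t * P1 t s) * DTV (π₁ s) (π₂ s) = _
      rw [mul_assoc, ← tsum_mul_right]
      congr 1
      exact tsum_congr fun t => by ring
    rw [Finset.sum_congr rfl fun s _ => hterm s, ← Finset.mul_sum]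
    congr 1
    rw [← Summable.tsum_finsetSum (fun s _ => hSPe s), hEd]
    exact tsum_congr fun t => by rw [hed, Finset.mul_sum]
  have hSPf : ∀ (s : S) (a : A),
      Summable (fun t => γ ^ t * (P1 t s * π₁ s a * DTV (p₁ s a) (p₂ s a))) := by
    intro s a
    apply summable_geom_bound hγ0 hγ1 (C := DTV (p₁ s a) (p₂ s a))
    intro t
    have h1 := (hP1p t).1 s
    have h2 := (hπ₁ s).1 a
    have h3 := DTV_nonneg (p₁ s a) (p₂ s a)
    rw [abs_of_nonneg (by positivity)]
    exact mul_le_of_le_one_left h3 (mul_le_one₀ (hP1le t s) h2 (hπ₁le s a))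
  have hSfs : ∀ s : S,
      Summable (fun t => γ ^ t * ∑ a : A, P1 t s * π₁ s a * DTV (p₁ s a) (p₂ s a)) := by
    intro s
    have h := summable_sum (s := (Finset.univ : Finset A)) (f := fun (a : A) (t : ℕ) =>
      γ ^ t * (P1 t s * π₁ s a * DTV (p₁ s a) (p₂ s a))) (fun a _ => hSPf s a)
    exact h.congr fun t => by rw [Finset.mul_sum]
  have hFeq : ∑ s : S, ∑ a : A, dSA γ μ p₁ π₁ s a * DTV (p₁ s a) (p₂ s a) = (1 - γ) * F := by
    have hterm : ∀ (s : S) (a : A), dSA γ μ p₁ π₁ s a * DTV (p₁ s a) (p₂ s a)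
        = (1 - γ) * ∑' t, γ ^ t * (P1 t s * π₁ s a * DTV (p₁ s a) (p₂ s a)) := by
      intro s a
      show (π₁ s a * ((1 - γ) * ∑' t, γ ^ t * P1 t s)) * DTV (p₁ s a) (p₂ s a) = _
      rw [show (π₁ s a * ((1 - γ) * ∑' t, γ ^ t * P1 t s)) * DTV (p₁ s a) (p₂ s a)
          = (1 - γ) * ((∑' t, γ ^ t * P1 t s) * (π₁ s a * DTV (p₁ s a) (p₂ s a))) from by ring,
        ← tsum_mul_right]
      congr 1
      exact tsum_congr fun t => by ring
    have hinner : ∀ s : S, ∑ a : A, dSA γ μ p₁ π₁ s a * DTV (p₁ s a) (p₂ s a)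
        = (1 - γ) * ∑' t, γ ^ t * ∑ a : A, P1 t s * π₁ s a * DTV (p₁ s a) (p₂ s a) := by
      intro s
      rw [Finset.sum_congr rfl fun a _ => hterm s a, ← Finset.mul_sum]
      congr 1
      rw [← Summable.tsum_finsetSum (fun a _ => hSPf s a)]
      exact tsum_congr fun t => by rw [Finset.mul_sum]
    rw [Finset.sum_congr rfl fun s _ => hinner s, ← Finset.mul_sum]
    congr 1
    rw [← Summable.tsum_finsetSum (fun s _ => hSfs s), hFd]
    exact tsum_congr fun t => by rw [hfd, Finset.mul_sum]
  have hSP1 : ∀ s : S, Summable (fun t => γ ^ t * P1 t s) := fun s =>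
    summable_geom_bound hγ0 hγ1 (C := 1) (fun t => by
      rw [abs_of_nonneg ((hP1p t).1 s)]; exact hP1le t s)
  have hSP2 : ∀ s : S, Summable (fun t => γ ^ t * P2 t s) := fun s =>
    summable_geom_bound hγ0 hγ1 (C := 1) (fun t => by
      rw [abs_of_nonneg ((hP2p t).1 s)]
      have h := Finset.single_le_sum (fun i _ => (hP2p t).1 i) (Finset.mem_univ s)
      rw [(hP2p t).2] at h; exact h)
  have hSabs : ∀ s : S, Summable (fun t => γ ^ t * |P1 t s - P2 t s|) := fun s =>
    summable_geom_bound hγ0 hγ1 (C := 2) (fun t => by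
      rw [abs_of_nonneg (abs_nonneg _)]
      calc |P1 t s - P2 t s| ≤ |P1 t s| + |P2 t s| := abs_sub _ _
        _ ≤ 2 := by
          rw [abs_of_nonneg ((hP1p t).1 s), abs_of_nonneg ((hP2p t).1 s)]
          have h := Finset.single_le_sum (fun i _ => (hP2p t).1 i) (Finset.mem_univ s)
          rw [(hP2p t).2] at h
          linarith [hP1le t s])
  have hdiffs : ∀ s : S, |dState γ μ p₁ π₁ s - dState γ μ p₂ π₂ s|
      ≤ (1 - γ) * ∑' t, γ ^ t * |P1 t s - P2 t s| := by
    intro s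
    show |(1 - γ) * ∑' t, γ ^ t * P1 t s - (1 - γ) * ∑' t, γ ^ t * P2 t s| ≤ _
    rw [← mul_sub, abs_mul, abs_of_nonneg h1γ.le]
    refine mul_le_mul_of_nonneg_left ?_ h1γ.le
    rw [← Summable.tsum_sub (hSP1 s) (hSP2 s)]
    have heq : ∀ t, |γ ^ t * P1 t s - γ ^ t * P2 t s| = γ ^ t * |P1 t s - P2 t s| := fun t => by
      rw [← mul_sub, abs_mul, abs_of_nonneg (pow_nonneg hγ0 t)]
    have hsn : Summable (fun t => |γ ^ t * P1 t s - γ ^ t * P2 t s|) :=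
      (hSabs s).congr fun t => (heq t).symm
    calc |∑' t, (γ ^ t * P1 t s - γ ^ t * P2 t s)|
        ≤ ∑' t, |γ ^ t * P1 t s - γ ^ t * P2 t s| := by
          simpa [Real.norm_eq_abs] using
            norm_tsum_le_tsum_norm (f := fun t => γ ^ t * P1 t s - γ ^ t * P2 t s)
              (by simpa [Real.norm_eq_abs] using hsn)
      _ = ∑' t, γ ^ t * |P1 t s - P2 t s| := tsum_congr heq
  have hsumdiff : ∑ s : S, |dState γ μ p₁ π₁ s - dState γ μ p₂ π₂ s| ≤ (1 - γ) * D := by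
    calc ∑ s : S, |dState γ μ p₁ π₁ s - dState γ μ p₂ π₂ s|
        ≤ ∑ s : S, (1 - γ) * ∑' t, γ ^ t * |P1 t s - P2 t s| :=
          Finset.sum_le_sum fun s _ => hdiffs s
      _ = (1 - γ) * ∑ s : S, ∑' t, γ ^ t * |P1 t s - P2 t s| := by rw [← Finset.mul_sum]
      _ = (1 - γ) * D := by
          congr 1
          rw [← Summable.tsum_finsetSum (fun s _ => hSabs s), hDd]
          exact tsum_congr fun t => by rw [hδd, Finset.mul_sum]
  have hd1nn : ∀ s : S, 0 ≤ dState γ μ p₁ π₁ s := fun s =>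
    mul_nonneg h1γ.le (tsum_nonneg fun t => mul_nonneg (pow_nonneg hγ0 t) ((hP1p t).1 s))
  have hact : ∀ s : S, ∑ a : A, |dSA γ μ p₁ π₁ s a - dSA γ μ p₂ π₂ s a|
      ≤ 2 * (dState γ μ p₁ π₁ s * DTV (π₁ s) (π₂ s))
        + |dState γ μ p₁ π₁ s - dState γ μ p₂ π₂ s| := by
    intro s
    show ∑ a : A, |π₁ s a * dState γ μ p₁ π₁ s - π₂ s a * dState γ μ p₂ π₂ s| ≤ _
    calc ∑ a : A, |π₁ s a * dState γ μ p₁ π₁ s - π₂ s a * dState γ μ p₂ π₂ s|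
        ≤ ∑ a : A, (|π₁ s a - π₂ s a| * dState γ μ p₁ π₁ s
            + π₂ s a * |dState γ μ p₁ π₁ s - dState γ μ p₂ π₂ s|) := by
          apply Finset.sum_le_sum; intro a _
          calc |π₁ s a * dState γ μ p₁ π₁ s - π₂ s a * dState γ μ p₂ π₂ s|
              = |(π₁ s a - π₂ s a) * dState γ μ p₁ π₁ s
                + π₂ s a * (dState γ μ p₁ π₁ s - dState γ μ p₂ π₂ s)| := by
                rw [show π₁ s a * dState γ μ p₁ π₁ s - π₂ s a * dState γ μ p₂ π₂ s
                  = (π₁ s a - π₂ s a) * dState γ μ p₁ π₁ s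
                    + π₂ s a * (dState γ μ p₁ π₁ s - dState γ μ p₂ π₂ s) from by ring]
            _ ≤ |(π₁ s a - π₂ s a) * dState γ μ p₁ π₁ s|
                + |π₂ s a * (dState γ μ p₁ π₁ s - dState γ μ p₂ π₂ s)| := abs_add_le _ _
            _ = |π₁ s a - π₂ s a| * dState γ μ p₁ π₁ s
                + π₂ s a * |dState γ μ p₁ π₁ s - dState γ μ p₂ π₂ s| := by
                rw [abs_mul, abs_mul, abs_of_nonneg (hd1nn s), abs_of_nonneg ((hπ₂ s).1 a)]
      _ = (∑ a : A, |π₁ s a - π₂ s a|) * dState γ μ p₁ π₁ s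
          + (∑ a : A, π₂ s a) * |dState γ μ p₁ π₁ s - dState γ μ p₂ π₂ s| := by
          rw [Finset.sum_add_distrib, ← Finset.sum_mul, ← Finset.sum_mul]
      _ = _ := by
          rw [sum_abs_eq_two_DTV, (hπ₂ s).2, one_mul]; ring
  have hmain : ∑ s : S, ∑ a : A, |dSA γ μ p₁ π₁ s a - dSA γ μ p₂ π₂ s a|
      ≤ 2 * (∑ s : S, dState γ μ p₁ π₁ s * DTV (π₁ s) (π₂ s))
        + ∑ s : S, |dState γ μ p₁ π₁ s - dState γ μ p₂ π₂ s| := by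
    calc ∑ s : S, ∑ a : A, |dSA γ μ p₁ π₁ s a - dSA γ μ p₂ π₂ s a|
        ≤ ∑ s : S, (2 * (dState γ μ p₁ π₁ s * DTV (π₁ s) (π₂ s))
            + |dState γ μ p₁ π₁ s - dState γ μ p₂ π₂ s|) :=
          Finset.sum_le_sum fun s _ => hact s
      _ = _ := by rw [Finset.sum_add_distrib, Finset.mul_sum]
  have hEb : (1 - γ) * E ≤ επ := hEeq ▸ hπ
  have hFb : (1 - γ) * F ≤ εm := hFeq ▸ hm
  have hchain : ∑ s : S, ∑ a : A, |dSA γ μ p₁ π₁ s a - dSA γ μ p₂ π₂ s a|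
      ≤ 2 * επ + (2 * γ) * E + (2 * γ) * F := by
    have h1 : ∑ s : S, dState γ μ p₁ π₁ s * DTV (π₁ s) (π₂ s) ≤ επ := hπ
    linarith [hmain, hsumdiff, hDrec]
  rw [show (1 / (1 - γ)) * (2 * γ * εm + 2 * επ) = (2 * γ * εm + 2 * επ) / (1 - γ) from by ring,
    le_div_iff₀ h1γ]
  have k1 : (2 * γ) * ((1 - γ) * E) ≤ (2 * γ) * επ :=
    mul_le_mul_of_nonneg_left hEb (by positivity)
  have k2 : (2 * γ) * ((1 - γ) * F) ≤ (2 * γ) * εm :=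
    mul_le_mul_of_nonneg_left hFb (by positivity)
  have k3 := mul_le_mul_of_nonneg_right hchain h1γ.le
  nlinarith [k1, k2, k3]
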